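/- arXiv:2602.04422 — 2 statements merged into one kernel-verified Lean document; each statement's English description precedes it below -/
import Mathlib

section
/- Let ∇_ε f = (∇_H f, ε^{-2} ∂_z f)^T be the scaled gradient and (u, u^♯)_{L²_ε} = (v, v^♯)_{L²} + ε²(w, w^♯)_{L²} the scaled inner product on L²(S, ℝ³), u = (v, w)^T. Let F = {(v, ∫_z^1 ∇_H·v dz')^T : v ∈ H₁} and let P_ε be the orthogonal projection of L²(S, ℝ³) onto F with respect to (·,·)_{L²_ε}. Then P_ε(∇_ε f) = 0 for every f ∈ H¹(S, ℝ). -/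
open MeasureTheory

noncomputable section

/-- Points of the ambient space `ℝ³ = ℝ² × ℝ`. -/
abbrev Pt : Type := (ℝ × ℝ) × ℝ

def ex : Pt := ((1, 0), 0)
def ey : Pt := ((0, 1), 0)
def ez : Pt := ((0, 0), 1)

/-- Horizontal divergence of a horizontal vector field. -/
def divH (v : Pt → ℝ × ℝ) (p : Pt) : ℝ :=
  (fderiv ℝ v p ex).1 + (fderiv ℝ v p ey).2

/-- The scaled gradient `∇_ε f = (∇_H f, ε⁻² ∂_z f)`. -/
def gradEps (ε : ℝ) (f : Pt → ℝ) : Pt → (ℝ × ℝ) × ℝ :=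
  fun p => ((fderiv ℝ f p ex, fderiv ℝ f p ey), (ε ^ 2)⁻¹ * fderiv ℝ f p ez)

/-- The scaled inner product `(u, u')_{L²_ε} = (v, v')_{L²} + ε² (w, w')_{L²}` on vector
fields `u = (v, w)` over `S`. -/
def innerEps (S : Set Pt) (ε : ℝ) (u u' : Pt → (ℝ × ℝ) × ℝ) : ℝ :=
  (∫ p in S, ((u p).1.1 * (u' p).1.1 + (u p).1.2 * (u' p).1.2))
    + ε ^ 2 * ∫ p in S, (u p).2 * (u' p).2

/-- Membership in `F = {(v, ∫_z^1 ∇_H·v dz') : v ∈ H₁}`: the horizontal part is a `C¹`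
field supported in `S_H`, with vanishing vertically averaged horizontal divergence, and the
vertical part is reconstructed from the horizontal divergence. -/
def memF (S_H : Set (ℝ × ℝ)) (u : Pt → (ℝ × ℝ) × ℝ) : Prop :=
  ContDiff ℝ 1 (fun p => (u p).1) ∧
  (∀ (q : ℝ × ℝ) (z : ℝ), q ∉ S_H → (u (q, z)).1 = 0) ∧
  (∀ q : ℝ × ℝ, (∫ z in Set.Ioc (-1:ℝ) 1, divH (fun p => (u p).1) (q, z)) = 0) ∧
  (∀ p : Pt, (u p).2 = ∫ z in Set.Ioc p.2 1, divH (fun p' => (u p').1) (p.1, z))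

/-!
Taking `u = P_ε(∇_ε f)` in the orthogonality relation gives `‖P_ε ∇_ε f‖²_ε = (∇_ε f, P_ε ∇_ε f)_ε`,
so it suffices that `∇_ε f` is `L²_ε`-orthogonal to every `u = (v, w) ∈ F`. The weight `ε²`
cancels against `ε⁻²`, leaving `∫_S ∇_H f · v + ∂_z f w`. Since `w = ∫_z^1 ∇_H·v` vanishes at
`z = ±1` (the vertical mean of `∇_H·v` is zero), integrating by parts in `z` turns the second
term into `∫_S f ∇_H·v`, and `∫_S ∇_H f · v + f ∇_H·v` vanishes slice by slice by integration by
parts in the horizontal variables, `v(·, z)` having compact support.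

`S_H` is an arbitrary bounded set, so the slice integral over `S_H` is replaced by one over the
whole plane using that a `C¹` field vanishing on a set has vanishing derivative at each Lebesgue
density point of it, where the tangent cone is the whole space.
-/

open Filter Set Metric Topology

section AddHaar

variable {E F : Type*} [NormedAddCommGroup E] [NormedSpace ℝ E] [MeasurableSpace E]
  [BorelSpace E] [FiniteDimensional ℝ E] {μ : Measure E} [μ.IsAddHaarMeasure]
  [NormedAddCommGroup F] [NormedSpace ℝ F]

theorem tangentConeAt_eq_univ_of_density_one {A : Set E} {x : E}
    (h : Tendsto (fun r => μ (A ∩ closedBall x r) / μ (closedBall x r)) (𝓝[>] 0) (𝓝 1)) :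
    tangentConeAt ℝ A x = univ := by
  refine eq_univ_of_forall fun e => ?_
  have hnear : ∀ n : ℕ, ∃ r ∈ Ioo (0 : ℝ) (1 / (n + 1)),
      ∃ y ∈ ball e (1 / (n + 1)), x + r • y ∈ A := by
    intro n
    have hpos : (0 : ℝ) < 1 / (n + 1) := Nat.one_div_pos_of_nat
    obtain ⟨r, ⟨a, haA, hax⟩, hr⟩ := ((Measure.eventually_nonempty_inter_smul_of_density_one μ A
      x h _ measurableSet_ball (measure_ball_pos μ e hpos).ne').and (Ioo_mem_nhdsGT hpos)).exists
    obtain ⟨x', hx', b, ⟨y, hy, rfl⟩, rfl⟩ := hax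
    rw [mem_singleton_iff.mp hx'] at haA
    exact ⟨r, hr, y, hy, haA⟩
  choose r hr y hy hyA using hnear
  have hsmall : Tendsto (fun n : ℕ => 1 / ((n : ℝ) + 1)) atTop (𝓝 0) :=
    tendsto_one_div_add_atTop_nhds_zero_nat
  have hr0 : Tendsto r atTop (𝓝 0) :=
    squeeze_zero (fun n => (hr n).1.le) (fun n => (hr n).2.le) hsmall
  have hye : Tendsto y atTop (𝓝 e) :=
    tendsto_iff_dist_tendsto_zero.mpr
      (squeeze_zero (fun n => dist_nonneg) (fun n => (hy n).le) hsmall)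
  refine mem_tangentConeAt_of_seq atTop (fun n => (r n)⁻¹) (fun n => r n • y n) ?_
    (Eventually.of_forall hyA) ?_
  · simpa using hr0.smul hye
  · refine hye.congr fun n => ?_
    rw [smul_smul, inv_mul_cancel₀ (hr n).1.ne', one_smul]

theorem ae_fderiv_eq_zero_of_eqOn_zero {v : E → F} {A : Set E} (hv : Continuous v)
    (hA : EqOn v 0 A) : ∀ᵐ x ∂μ, x ∈ A → fderiv ℝ v x = 0 := by
  -- Working with `closure A` spares a measurability assumption on `A`.
  have hdens := Besicovitch.ae_tendsto_measure_inter_div μ (closure A)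
  rw [ae_restrict_iff' isClosed_closure.measurableSet] at hdens
  filter_upwards [hdens] with x hx hxA
  by_cases hd : DifferentiableAt ℝ v x
  · have hunique : UniqueDiffWithinAt ℝ (closure A) x :=
      ⟨by simp [tangentConeAt_eq_univ_of_density_one (hx (subset_closure hxA))],
        subset_closure (subset_closure hxA)⟩
    have hzero : HasFDerivWithinAt v (0 : E →L[ℝ] F) (closure A) x :=
      (hasFDerivWithinAt_const 0 x _).congr (hA.closure hv continuous_const) (hA hxA)
    exact hunique.eq hd.hasFDerivAt.hasFDerivWithinAt hzero
  · exact fderiv_zero_of_not_differentiableAt hd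

theorem integral_fderiv_mul_add_mul_fderiv_eq_zero {h g : E → ℝ} (hh : ContDiff ℝ 1 h)
    (hg : ContDiff ℝ 1 g) (hgc : HasCompactSupport g) (e : E) :
    ∫ x, (fderiv ℝ h x e * g x + h x * fderiv ℝ g x e) ∂μ = 0 := by
  have hh' : Continuous fun x => fderiv ℝ h x e :=
    (hh.continuous_fderiv one_ne_zero).clm_apply continuous_const
  have hg' : Continuous fun x => fderiv ℝ g x e :=
    (hg.continuous_fderiv one_ne_zero).clm_apply continuous_const
  have hgc' : HasCompactSupport fun x => fderiv ℝ g x e :=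
    (hgc.fderiv (𝕜 := ℝ)).comp_left (g := fun L : E →L[ℝ] ℝ => L e) rfl
  have h'g : Integrable (fun x => fderiv ℝ h x e * g x) μ :=
    (hh'.mul hg.continuous).integrable_of_hasCompactSupport hgc.mul_left
  have hg'' : Integrable (fun x => h x * fderiv ℝ g x e) μ :=
    (hh.continuous.mul hg').integrable_of_hasCompactSupport hgc'.mul_left
  rw [integral_add h'g hg'', integral_mul_fderiv_eq_neg_fderiv_mul_of_integrable h'g hg''
    ((hh.continuous.mul hg.continuous).integrable_of_hasCompactSupport hgc.mul_left)
    (fun x _ => hh.differentiable one_ne_zero x) (fun x _ => hg.differentiable one_ne_zero x),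
    add_neg_cancel]

theorem setIntegral_fderiv_mul_add_mul_fderiv_eq_zero {h g : E → ℝ} {T : Set E}
    (hT : Bornology.IsBounded T) (hh : ContDiff ℝ 1 h) (hg : ContDiff ℝ 1 g)
    (hgT : ∀ x ∉ T, g x = 0) (e : E) :
    ∫ x in T, (fderiv ℝ h x e * g x + h x * fderiv ℝ g x e) ∂μ = 0 := by
  have hgc : HasCompactSupport g :=
    HasCompactSupport.intro hT.isCompact_closure fun x hx => hgT x fun h => hx (subset_closure h)
  rw [setIntegral_eq_integral_of_ae_compl_eq_zero,
    integral_fderiv_mul_add_mul_fderiv_eq_zero hh hg hgc]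
  filter_upwards [ae_fderiv_eq_zero_of_eqOn_zero (μ := μ) (A := Tᶜ) hg.continuous hgT]
    with x hx hxT
  simp [hgT x hxT, hx hxT]

end AddHaar

theorem ContinuousOn.integrableOn_of_isBounded {X G : Type*} [MetricSpace X] [ProperSpace X]
    [MeasurableSpace X] [OpensMeasurableSpace X] {μ : Measure X} [IsFiniteMeasureOnCompacts μ]
    [NormedAddCommGroup G] {f : X → G} {s : Set X} (hf : ContinuousOn f (closure s))
    (hs : Bornology.IsBounded s) : IntegrableOn f s μ :=
  (hf.integrableOn_compact hs.isCompact_closure).mono_set subset_closure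

theorem setIntegral_prod_symm {α β : Type*} [MeasurableSpace α] [MeasurableSpace β]
    {μ : Measure α} {ν : Measure β} [SFinite μ] [SFinite ν] (f : α × β → ℝ) {s : Set α}
    {t : Set β} (hf : IntegrableOn f (s ×ˢ t) (μ.prod ν)) :
    ∫ z in s ×ˢ t, f z ∂μ.prod ν = ∫ y in t, ∫ x in s, f (x, y) ∂μ ∂ν := by
  simp only [← Measure.prod_restrict s t, IntegrableOn] at hf ⊢
  exact integral_prod_symm f hf

namespace intervalIntegral

theorem continuous_parametric_primitive_left_of_continuous {X : Type*} [TopologicalSpace X]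
    {g : X × ℝ → ℝ} (hg : Continuous g) (b : ℝ) :
    Continuous fun p : X × ℝ => ∫ t in p.2..b, g (p.1, t) := by
  refine (continuous_parametric_primitive_of_continuous (μ := volume) (a₀ := b)
    (f := fun x t => g (x, t)) hg).neg.congr fun p => ?_
  rw [Pi.neg_apply, integral_symm, neg_neg]

theorem integral_deriv_mul_primitive_eq {φ φ' d : ℝ → ℝ} {a b : ℝ}
    (hφ : ∀ t, HasDerivAt φ (φ' t) t) (hφ' : Continuous φ') (hd : Continuous d)
    (hd0 : ∫ t in a..b, d t = 0) :
    ∫ t in a..b, φ' t * ∫ s in t..b, d s = ∫ t in a..b, φ t * d t := by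
  have hprim : ∀ t ∈ uIcc a b, HasDerivAt (fun t => ∫ s in t..b, d s) (-d t) t :=
    fun t _ => integral_hasDerivAt_left (hd.intervalIntegrable _ _)
      (hd.stronglyMeasurableAtFilter _ _) hd.continuousAt
  have hparts := integral_mul_deriv_eq_deriv_mul (fun t _ => hφ t) hprim
    (hφ'.intervalIntegrable _ _) (hd.neg.intervalIntegrable _ _)
  simp only [integral_same, hd0, mul_zero, sub_zero, mul_neg, integral_neg] at hparts
  linarith

end intervalIntegral

theorem fderiv_comp_prodMk_left_apply {E F G : Type*} [NormedAddCommGroup E] [NormedSpace ℝ E]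
    [NormedAddCommGroup F] [NormedSpace ℝ F] [NormedAddCommGroup G] [NormedSpace ℝ G]
    {f : E × F → G} {q : E} {z : F} (hf : DifferentiableAt ℝ f (q, z)) (e : E) :
    fderiv ℝ (fun q => f (q, z)) q e = fderiv ℝ f (q, z) (e, 0) := by
  change fderiv ℝ (f ∘ fun q => (q, z)) q e = _
  rw [(hf.hasFDerivAt.comp q (hasFDerivAt_prodMk_left q z)).fderiv]
  rfl

theorem continuous_divH {v : Pt → ℝ × ℝ} (hv : ContDiff ℝ 1 v) : Continuous (divH v) := by
  unfold divH
  fun_prop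

theorem continuous_gradEps (ε : ℝ) {f : Pt → ℝ} (hf : ContDiff ℝ 1 f) :
    Continuous (gradEps ε f) := by
  unfold gradEps
  fun_prop

theorem setIntegral_fderiv_mul_add_mul_divH_eq_zero {S_H : Set (ℝ × ℝ)}
    (hSb : Bornology.IsBounded S_H) {f : Pt → ℝ} {v : Pt → ℝ × ℝ} (hf : ContDiff ℝ 1 f)
    (hv : ContDiff ℝ 1 v) (hv0 : ∀ q z, q ∉ S_H → v (q, z) = 0) (z : ℝ) :
    ∫ q in S_H, (fderiv ℝ f (q, z) ex * (v (q, z)).1 + fderiv ℝ f (q, z) ey * (v (q, z)).2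
      + f (q, z) * divH v (q, z)) = 0 := by
  have hslice : ContDiff ℝ 1 fun q : ℝ × ℝ => ((q, z) : Pt) := contDiff_prodMk_left z
  have hx := setIntegral_fderiv_mul_add_mul_fderiv_eq_zero (μ := volume) hSb (hf.comp hslice)
    (hv.fst.comp hslice) (fun q hq => by simp [hv0 q z hq]) (1, 0)
  have hy := setIntegral_fderiv_mul_add_mul_fderiv_eq_zero (μ := volume) hSb (hf.comp hslice)
    (hv.snd.comp hslice) (fun q hq => by simp [hv0 q z hq]) (0, 1)
  have hfd := hf.differentiable one_ne_zero
  have hvd := hv.differentiable one_ne_zero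
  simp only [Function.comp_def, fderiv_comp_prodMk_left_apply (hfd _),
    fderiv_comp_prodMk_left_apply (hvd _).fst, fderiv_comp_prodMk_left_apply (hvd _).snd,
    fderiv.fst (hvd _), fderiv.snd (hvd _)] at hx hy
  have hsum := congrArg₂ (· + ·) hx hy
  rw [← integral_add, add_zero] at hsum
  · rw [← hsum]
    congr 1 with q
    simp only [divH, ex, ey, ContinuousLinearMap.comp_apply, ContinuousLinearMap.coe_fst',
      ContinuousLinearMap.coe_snd']
    ring
  all_goals exact (Continuous.continuousOn (by fun_prop)).integrableOn_of_isBounded hSb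

theorem setIntegral_fderiv_ez_mul_primitive_eq {f : Pt → ℝ} {v : Pt → ℝ × ℝ}
    (hf : ContDiff ℝ 1 f) (hv : ContDiff ℝ 1 v) {q : ℝ × ℝ}
    (havg : ∫ z in Ioc (-1 : ℝ) 1, divH v (q, z) = 0) :
    ∫ z in Ioo (-1 : ℝ) 1, fderiv ℝ f (q, z) ez * ∫ t in z..1, divH v (q, t)
      = ∫ z in Ioo (-1 : ℝ) 1, f (q, z) * divH v (q, z) := by
  have hslice : ∀ z, HasDerivAt (fun z => f (q, z)) (fderiv ℝ f (q, z) ez) z := fun z =>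
    (hf.differentiable one_ne_zero _).hasFDerivAt.comp_hasDerivAt z
      ((hasDerivAt_const z q).prodMk (hasDerivAt_id z))
  have hline : Continuous fun z : ℝ => ((q, z) : Pt) := continuous_const.prodMk continuous_id
  have h11 : (-1 : ℝ) ≤ 1 := by norm_num
  have key := intervalIntegral.integral_deriv_mul_primitive_eq hslice
    (((hf.continuous_fderiv one_ne_zero).comp hline).clm_apply continuous_const)
    ((continuous_divH hv).comp hline) (by rwa [intervalIntegral.integral_of_le h11])
  simpa only [intervalIntegral.integral_of_le h11, integral_Ioc_eq_integral_Ioo,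
    Function.comp_def] using key

namespace memF

variable {S_H : Set (ℝ × ℝ)} {u : Pt → (ℝ × ℝ) × ℝ}

theorem snd_eq (hu : memF S_H u) {p : Pt} (hp : p.2 ≤ 1) :
    (u p).2 = ∫ t in p.2..1, divH (fun p => (u p).1) (p.1, t) := by
  rw [hu.2.2.2 p, intervalIntegral.integral_of_le hp]

theorem continuousOn (hu : memF S_H u) : ContinuousOn u {p : Pt | p.2 ≤ 1} :=
  hu.1.continuous.continuousOn.prodMk
    ((intervalIntegral.continuous_parametric_primitive_left_of_continuous
      (continuous_divH hu.1) 1).continuousOn.congr fun _ hp => hu.snd_eq hp)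

theorem setIntegral_fderiv_ez_mul_snd (hSb : Bornology.IsBounded S_H) (hu : memF S_H u)
    {f : Pt → ℝ} (hf : ContDiff ℝ 1 f) :
    ∫ p in S_H ×ˢ Ioo (-1 : ℝ) 1, fderiv ℝ f p ez * (u p).2
      = ∫ p in S_H ×ˢ Ioo (-1 : ℝ) 1, f p * divH (fun p => (u p).1) p := by
  have hdiv := continuous_divH hu.1
  have hW := intervalIntegral.continuous_parametric_primitive_left_of_continuous hdiv 1
  have hint : ∀ {g : Pt → ℝ}, Continuous g → IntegrableOn g (S_H ×ˢ Ioo (-1 : ℝ) 1) :=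
    fun hg => hg.continuousOn.integrableOn_of_isBounded (hSb.prod (isBounded_Ioo _ _))
  have hbelow : ∀ᵐ p ∂volume.restrict (S_H ×ˢ Ioo (-1 : ℝ) 1), p.2 ≤ 1 :=
    ae_restrict_of_ae_restrict_of_subset (fun p hp => hp.2.2.le)
      (ae_restrict_mem (measurableSet_le measurable_snd measurable_const))
  calc ∫ p in S_H ×ˢ Ioo (-1 : ℝ) 1, fderiv ℝ f p ez * (u p).2
      = ∫ p in S_H ×ˢ Ioo (-1 : ℝ) 1,
          fderiv ℝ f p ez * ∫ t in p.2..1, divH (fun p => (u p).1) (p.1, t) :=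
        integral_congr_ae (hbelow.mono fun p hp => by simp only [hu.snd_eq hp])
    _ = ∫ q in S_H, ∫ z in Ioo (-1 : ℝ) 1, f (q, z) * divH (fun p => (u p).1) (q, z) :=
        (setIntegral_prod _ (hint (by fun_prop))).trans (integral_congr_ae <| .of_forall
          fun q => setIntegral_fderiv_ez_mul_primitive_eq hf hu.1 (hu.2.2.1 q))
    _ = ∫ p in S_H ×ˢ Ioo (-1 : ℝ) 1, f p * divH (fun p => (u p).1) p := by
        refine (setIntegral_prod (fun p => f p * divH (fun p => (u p).1) p) (hint ?_)).symm
        fun_prop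

theorem setIntegral_fderiv_mul_fst_add_mul_divH (hSb : Bornology.IsBounded S_H)
    (hu : memF S_H u) {f : Pt → ℝ} (hf : ContDiff ℝ 1 f) :
    ∫ p in S_H ×ˢ Ioo (-1 : ℝ) 1, (fderiv ℝ f p ex * (u p).1.1 + fderiv ℝ f p ey * (u p).1.2
      + f p * divH (fun p => (u p).1) p) = 0 := by
  have hv := hu.1.continuous
  have hdiv := continuous_divH hu.1
  refine (setIntegral_prod_symm _ ((Continuous.continuousOn ?_).integrableOn_of_isBounded
    (hSb.prod (isBounded_Ioo _ _)))).trans ?_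
  · fun_prop
  · simp only [setIntegral_fderiv_mul_add_mul_divH_eq_zero hSb hf hu.1 hu.2.1, integral_zero]

end memF

theorem innerEps_sub_left {S : Set Pt} (hS : Bornology.IsBounded S) (ε : ℝ)
    {a b c : Pt → (ℝ × ℝ) × ℝ} (ha : ContinuousOn a (closure S))
    (hb : ContinuousOn b (closure S)) (hc : ContinuousOn c (closure S)) :
    innerEps S ε (fun p => a p - b p) c = innerEps S ε a c - innerEps S ε b c := by
  have hint : ∀ {g : Pt → ℝ}, ContinuousOn g (closure S) → IntegrableOn g S :=
    fun hg => hg.integrableOn_of_isBounded hS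
  have hhor : ∫ p in S, ((a p - b p).1.1 * (c p).1.1 + (a p - b p).1.2 * (c p).1.2)
      = (∫ p in S, ((a p).1.1 * (c p).1.1 + (a p).1.2 * (c p).1.2))
        - ∫ p in S, ((b p).1.1 * (c p).1.1 + (b p).1.2 * (c p).1.2) := by
    rw [← integral_sub (hint (by fun_prop)) (hint (by fun_prop))]
    congr 1 with p
    simp only [Prod.fst_sub, Prod.snd_sub]
    ring
  have hvert : ∫ p in S, (a p - b p).2 * (c p).2
      = (∫ p in S, (a p).2 * (c p).2) - ∫ p in S, (b p).2 * (c p).2 := by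
    rw [← integral_sub (hint (by fun_prop)) (hint (by fun_prop))]
    congr 1 with p
    simp only [Prod.snd_sub]
    ring
  unfold innerEps
  rw [hhor, hvert]
  ring

theorem innerEps_gradEps_eq_zero {S_H : Set (ℝ × ℝ)} (hSb : Bornology.IsBounded S_H) {ε : ℝ}
    (hε : ε ≠ 0) {f : Pt → ℝ} (hf : ContDiff ℝ 1 f) {u : Pt → (ℝ × ℝ) × ℝ}
    (hu : memF S_H u) : innerEps (S_H ×ˢ Ioo (-1 : ℝ) 1) ε (gradEps ε f) u = 0 := by
  have hv := hu.1.continuous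
  have hdiv := continuous_divH hu.1
  have hint : ∀ {g : Pt → ℝ}, Continuous g → IntegrableOn g (S_H ×ˢ Ioo (-1 : ℝ) 1) :=
    fun hg => hg.continuousOn.integrableOn_of_isBounded (hSb.prod (isBounded_Ioo _ _))
  have hvert : ε ^ 2 * ∫ p in S_H ×ˢ Ioo (-1 : ℝ) 1, (gradEps ε f p).2 * (u p).2
      = ∫ p in S_H ×ˢ Ioo (-1 : ℝ) 1, f p * divH (fun p => (u p).1) p := by
    simp only [gradEps, mul_assoc, integral_const_mul, ← hu.setIntegral_fderiv_ez_mul_snd hSb hf]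
    field_simp
  unfold innerEps
  rw [hvert, ← integral_add (hint (by fun_prop)) (hint (by fun_prop))]
  exact hu.setIntegral_fderiv_mul_fst_add_mul_divH hSb hf

/-- `Pg` stands for `P_ε(∇_ε f)`, encoded by the two properties characterising the orthogonal
projection: `Pg ∈ F` and `∇_ε f - Pg` is `L²_ε`-orthogonal to `F`. -/
theorem scaled_gradient_projection_vanishes_general
    (S_H : Set (ℝ × ℝ)) (hSb : Bornology.IsBounded S_H)
    (ε : ℝ) (hε : 0 < ε)
    (f : Pt → ℝ) (hf : ContDiff ℝ 1 f)
    (Pg : Pt → (ℝ × ℝ) × ℝ)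
    (hmem : memF S_H Pg)
    (hproj : ∀ u, memF S_H u →
      innerEps (S_H ×ˢ Set.Ioo (-1:ℝ) 1) ε (fun p => gradEps ε f p - Pg p) u = 0) :
    innerEps (S_H ×ˢ Set.Ioo (-1:ℝ) 1) ε Pg Pg = 0 := by
  have hS : Bornology.IsBounded (S_H ×ˢ Set.Ioo (-1 : ℝ) 1) := hSb.prod (isBounded_Ioo _ _)
  have hPg : ContinuousOn Pg (closure (S_H ×ˢ Set.Ioo (-1 : ℝ) 1)) :=
    hmem.continuousOn.mono (closure_minimal (fun p hp => hp.2.2.le)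
      (isClosed_le continuous_snd continuous_const))
  have h := hproj Pg hmem
  rw [innerEps_sub_left hS ε (continuous_gradEps ε hf).continuousOn hPg hPg,
    innerEps_gradEps_eq_zero hSb hε.ne' hf hmem] at h
  linarith

/-- If `P_ε` is the orthogonal projection of `L²(S, ℝ³)` onto
`F = {(v, ∫_z^1 ∇_H·v dz') : v ∈ H₁}` with respect to the scaled inner product
`(·,·)_{L²_ε}`, then `P_ε(∇_ε f) = 0` (in `L²_ε`) for every `f ∈ H¹(S, ℝ)`.
Here the projection is encoded by its two defining properties: `P_ε(∇_ε f) ∈ F` and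
`∇_ε f − P_ε(∇_ε f)` is `L²_ε`-orthogonal to `F`. -/
theorem scaled_gradient_projection_vanishes
    (S_H : Set (ℝ × ℝ)) (hSm : MeasurableSet S_H) (hSb : Bornology.IsBounded S_H)
    (ε : ℝ) (hε : 0 < ε)
    (f : Pt → ℝ) (hf : ContDiff ℝ 1 f)
    (Pg : Pt → (ℝ × ℝ) × ℝ)
    (hmem : memF S_H Pg)
    (hproj : ∀ u, memF S_H u →
      innerEps (S_H ×ˢ Set.Ioo (-1:ℝ) 1) ε (fun p => gradEps ε f p - Pg p) u = 0) :
    innerEps (S_H ×ˢ Set.Ioo (-1:ℝ) 1) ε Pg Pg = 0 :=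
  scaled_gradient_projection_vanishes_general S_H hSb ε hε f hf Pg hmem hproj
end
end

section
/- For any ξ > 0 there is C_ξ > 0 such that for all V ∈ H¹(S, ℝ²), v ∈ H²(S, ℝ²) and W ∈ H¹(S, ℝ): |(W V, ∂_z v)_{L²}| ≤ C_ξ (1 + ‖v‖_{H¹}² ‖v‖_{H²}²)(‖V‖_{L²}² + ‖W‖_{L²}²) + ξ (‖V‖_{H¹}² + ‖W‖_{H¹}²). -/
open MeasureTheory

noncomputable section

/-- Dot product on `ℝ²`. -/
def inner2 (a b : ℝ × ℝ) : ℝ := a.1 * b.1 + a.2 * b.2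

/-- Squared `L²` norm. -/
def L2sq {F : Type*} [NormedAddCommGroup F] (f : Pt → F) : ℝ := ∫ p : Pt, ‖f p‖ ^ 2

/-- Squared `H^m` Sobolev norm (via iterated derivatives). -/
def HSobSq {F : Type*} [NormedAddCommGroup F] [NormedSpace ℝ F] (m : ℕ) (f : Pt → F) : ℝ :=
  ∑ n ∈ Finset.range (m + 1), ∫ p : Pt, ‖iteratedFDeriv ℝ n f p‖ ^ 2

/-
Bound the integrand pointwise by `2 |W| |V| |∂_z v|` and apply Hölder's inequality with three
`L³` factors. Each `L³` norm interpolates between `L²` and `L⁶`, `‖u‖₃² ≤ ‖u‖₂ ‖u‖₆`, and the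
Gagliardo–Nirenberg–Sobolev inequality in dimension three gives `‖u‖₆ ≤ C ‖Du‖₂`. Hence the
fourth power of the integral is at most a constant times the product
`(‖V‖₂² ‖V‖²_{H¹}) (‖W‖₂² ‖W‖²_{H¹}) (‖v‖²_{H¹} ‖v‖²_{H²})`, and the AM-GM inequality splits
this product into the two terms of the claimed bound.
-/

open scoped ENNReal

theorem norm_inner2_le (a b : ℝ × ℝ) : ‖inner2 a b‖ ≤ 2 * ‖a‖ * ‖b‖ :=
  calc ‖inner2 a b‖ ≤ ‖a.1 * b.1‖ + ‖a.2 * b.2‖ := norm_add_le _ _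
    _ ≤ ‖a‖ * ‖b‖ + ‖a‖ * ‖b‖ := by
      gcongr <;> exact norm_mul_le_of_le (by simp [Prod.norm_def]) (by simp [Prod.norm_def])
    _ = 2 * ‖a‖ * ‖b‖ := by ring

section holder
variable {α : Type*} [MeasurableSpace α] {μ : Measure α}

-- `‖f‖ = ‖f‖^(1/2) * ‖f‖^(1/2)`, and Hölder with `1/3 = 1/4 + 1/12`.
theorem eLpNorm_three_sq_le_eLpNorm_two_mul_eLpNorm_six {E : Type*} [NormedAddCommGroup E]
    (f : α → E) (hf : AEStronglyMeasurable f μ) :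
    eLpNorm f 3 μ ^ 2 ≤ eLpNorm f 2 μ * eLpNorm f 6 μ := by
  have hsqrt : AEStronglyMeasurable (fun x => ‖f x‖ ^ (1 / 2 : ℝ)) μ :=
    hf.norm.aemeasurable.pow_const _ |>.aestronglyMeasurable
  have : ENNReal.HolderTriple 4 12 3 := ⟨by
    rw [← ENNReal.toReal_eq_toReal_iff' (by simp) (by simp), ENNReal.toReal_add (by simp) (by simp)]
    norm_num⟩
  have holder := eLpNorm_le_eLpNorm_mul_eLpNorm_of_nnnorm (p := 4) (q := 12) (r := 3) hsqrt hsqrt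
    (fun a b : ℝ => a * b) 1 (ae_of_all _ fun x => by simp [nnnorm_mul])
  have hsq : ∀ x, ‖f x‖ ^ (1 / 2 : ℝ) * ‖f x‖ ^ (1 / 2 : ℝ) = ‖f x‖ := fun x => by
    rw [← Real.rpow_add' (norm_nonneg _) (by norm_num)]; norm_num
  have h4 : (4 : ℝ≥0∞) * ENNReal.ofReal (1 / 2) = 2 := by
    rw [← ENNReal.toReal_eq_toReal_iff' (by simp [ENNReal.mul_eq_top]) (by simp)]; simp; norm_num
  have h12 : (12 : ℝ≥0∞) * ENNReal.ofReal (1 / 2) = 6 := by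
    rw [← ENNReal.toReal_eq_toReal_iff' (by simp [ENNReal.mul_eq_top]) (by simp)]; simp; norm_num
  simp only [hsq, eLpNorm_norm, one_mul, ENNReal.coe_one] at holder
  rw [eLpNorm_norm_rpow _ (by norm_num), eLpNorm_norm_rpow _ (by norm_num), h4, h12,
    ← ENNReal.mul_rpow_of_nonneg _ _ (by norm_num)] at holder
  calc eLpNorm f 3 μ ^ 2 ≤ ((eLpNorm f 2 μ * eLpNorm f 6 μ) ^ (1 / 2 : ℝ)) ^ 2 := by gcongr
    _ = eLpNorm f 2 μ * eLpNorm f 6 μ := by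
      rw [← ENNReal.rpow_natCast, ← ENNReal.rpow_mul]; norm_num

theorem eLpNorm_mul_inner2_le {W : α → ℝ} {V g : α → ℝ × ℝ} (hW : AEStronglyMeasurable W μ)
    (hV : AEStronglyMeasurable V μ) (hg : AEStronglyMeasurable g μ) :
    eLpNorm (fun x => W x * inner2 (V x) (g x)) 1 μ ≤
      2 * eLpNorm W 3 μ * eLpNorm V 3 μ * eLpNorm g 3 μ := by
  have : ENNReal.HolderTriple 3 3 (3 / 2) := ⟨by
    rw [← ENNReal.toReal_eq_toReal_iff' (by simp) (by simp), ENNReal.toReal_add (by simp) (by simp)]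
    norm_num⟩
  have : ENNReal.HolderTriple 3 (3 / 2) 1 := ⟨by
    rw [← ENNReal.toReal_eq_toReal_iff' (by simp) (by simp), ENNReal.toReal_add (by simp) (by simp)]
    norm_num⟩
  have hVg : AEStronglyMeasurable (fun x => inner2 (V x) (g x)) μ := by
    unfold inner2; fun_prop
  have inner_le := eLpNorm_le_eLpNorm_mul_eLpNorm_of_nnnorm (p := 3) (q := 3) (r := 3 / 2)
    hV hg inner2 2 (ae_of_all _ fun x => by
      rw [← NNReal.coe_le_coe]; push_cast; exact norm_inner2_le _ _)
  calc eLpNorm (fun x => W x * inner2 (V x) (g x)) 1 μ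
      ≤ 1 * eLpNorm W 3 μ * eLpNorm (fun x => inner2 (V x) (g x)) (3 / 2) μ := by
        exact_mod_cast eLpNorm_le_eLpNorm_mul_eLpNorm_of_nnnorm hW hVg (fun a b : ℝ => a * b) 1
          (ae_of_all _ fun x => by simp [nnnorm_mul])
    _ ≤ 1 * eLpNorm W 3 μ * (2 * eLpNorm V 3 μ * eLpNorm g 3 μ) := by
        gcongr; exact_mod_cast inner_le
    _ = 2 * eLpNorm W 3 μ * eLpNorm V 3 μ * eLpNorm g 3 μ := by ring

theorem abs_integral_mul_inner2_le {W : α → ℝ} {V g : α → ℝ × ℝ} (hW : MemLp W 3 μ)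
    (hV : MemLp V 3 μ) (hg : MemLp g 3 μ) :
    |∫ x, W x * inner2 (V x) (g x) ∂μ| ≤
      2 * (eLpNorm W 3 μ).toReal * (eLpNorm V 3 μ).toReal * (eLpNorm g 3 μ).toReal := by
  have hint := (enorm_integral_le_lintegral_enorm _).trans
    ((eLpNorm_one_eq_lintegral_enorm (μ := μ)).symm.le.trans
      (eLpNorm_mul_inner2_le hW.1 hV.1 hg.1))
  have hfin : 2 * eLpNorm W 3 μ * eLpNorm V 3 μ * eLpNorm g 3 μ ≠ ∞ := by
    have := hW.2.ne; have := hV.2.ne; have := hg.2.ne; finiteness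
  calc |∫ x, W x * inner2 (V x) (g x) ∂μ| = ‖∫ x, W x * inner2 (V x) (g x) ∂μ‖ₑ.toReal := by
        rw [toReal_enorm, Real.norm_eq_abs]
    _ ≤ (2 * eLpNorm W 3 μ * eLpNorm V 3 μ * eLpNorm g 3 μ).toReal :=
        ENNReal.toReal_mono hfin hint
    _ = _ := by simp only [ENNReal.toReal_mul, ENNReal.toReal_ofNat]

end holder

section directional
variable {𝕜 E F : Type*} [NontriviallyNormedField 𝕜] [NormedAddCommGroup E] [NormedSpace 𝕜 E]
  [NormedAddCommGroup F] [NormedSpace 𝕜 F]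

theorem norm_fderiv_apply_le_norm_iteratedFDeriv_one (v : E → F) (x e : E) :
    ‖fderiv 𝕜 v x e‖ ≤ ‖iteratedFDeriv 𝕜 1 v x‖ * ‖e‖ := by
  rw [norm_iteratedFDeriv_one]; exact (fderiv 𝕜 v x).le_opNorm e

theorem norm_fderiv_fderiv_apply_le_norm_iteratedFDeriv_two {v : E → F} {x : E}
    (hv : DifferentiableAt 𝕜 (fderiv 𝕜 v) x) (e : E) :
    ‖fderiv 𝕜 (fun y => fderiv 𝕜 v y e) x‖ ≤ ‖iteratedFDeriv 𝕜 2 v x‖ * ‖e‖ := by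
  rw [fderiv_clm_apply hv (differentiableAt_const e), fderiv_const_apply,
    ContinuousLinearMap.comp_zero, zero_add, ← norm_iteratedFDeriv_fderiv (n := 1),
    norm_iteratedFDeriv_one, ← ContinuousLinearMap.opNorm_flip (fderiv 𝕜 (fderiv 𝕜 v) x)]
  exact (fderiv 𝕜 (fderiv 𝕜 v) x).flip.le_opNorm e

end directional

section sobolev
variable {E F : Type*} [NormedAddCommGroup E] [NormedSpace ℝ E] [MeasurableSpace E] [BorelSpace E]
  [FiniteDimensional ℝ E] {μ : Measure E} [μ.IsAddHaarMeasure]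
  [NormedAddCommGroup F] [NormedSpace ℝ F] [FiniteDimensional ℝ F]

theorem eLpNorm_three_sq_le_eLpNorm_mul_eLpNorm_fderiv (hE : Module.finrank ℝ E = 3) {u : E → F}
    (hu : ContDiff ℝ 1 u) (h2u : HasCompactSupport u) :
    eLpNorm u 3 μ ^ 2 ≤
      SNormLESNormFDerivOfEqConst F μ 2 * eLpNorm u 2 μ * eLpNorm (fderiv ℝ u) 2 μ := by
  have sobolev := eLpNorm_le_eLpNorm_fderiv_of_eq μ hu h2u (p := 2) (p' := 6) (by norm_num)
    (by simp [hE]) (by simp [hE]; norm_num)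
  calc eLpNorm u 3 μ ^ 2 ≤ eLpNorm u 2 μ * eLpNorm u 6 μ :=
        eLpNorm_three_sq_le_eLpNorm_two_mul_eLpNorm_six u hu.continuous.aestronglyMeasurable
    _ ≤ eLpNorm u 2 μ * (SNormLESNormFDerivOfEqConst F μ 2 * eLpNorm (fderiv ℝ u) 2 μ) := by
        gcongr; exact_mod_cast sobolev
    _ = _ := by ring

end sobolev

instance : (volume : Measure (ℝ × ℝ)).IsAddHaarMeasure := by
  rw [Measure.volume_eq_prod]; infer_instance

instance : (volume : Measure Pt).IsAddHaarMeasure := by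
  rw [Measure.volume_eq_prod]; infer_instance

section norms
variable {F G : Type*} [NormedAddCommGroup F] [NormedAddCommGroup G]

theorem L2sq_nonneg (f : Pt → G) : 0 ≤ L2sq f := integral_nonneg fun _ => by positivity

theorem HSobSq_nonneg [NormedSpace ℝ F] (m : ℕ) (f : Pt → F) : 0 ≤ HSobSq m f :=
  Finset.sum_nonneg fun _ _ => L2sq_nonneg _

theorem toReal_eLpNorm_two_sq {f : Pt → G} (hf : MemLp f 2) :
    (eLpNorm f 2 volume).toReal ^ 2 = L2sq f := by
  rw [hf.eLpNorm_eq_integral_rpow_norm two_ne_zero ENNReal.ofNat_ne_top,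
    ENNReal.toReal_ofReal (by positivity)]
  simpa [Real.rpow_two, L2sq] using Real.rpow_inv_natCast_pow (L2sq_nonneg f) two_ne_zero

theorem L2sq_le_L2sq_of_norm_le {f : Pt → F} {g : Pt → G} (hg : Integrable (fun p => ‖g p‖ ^ 2))
    (hfg : ∀ p, ‖f p‖ ≤ ‖g p‖) : L2sq f ≤ L2sq g :=
  integral_mono_of_nonneg (ae_of_all _ fun _ => by positivity) hg
    (ae_of_all _ fun p => pow_le_pow_left₀ (norm_nonneg _) (hfg p) 2)

theorem integrable_norm_iteratedFDeriv_sq [NormedSpace ℝ F] {m k : ℕ} {u : Pt → F}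
    (hu : ContDiff ℝ m u) (h2u : HasCompactSupport u) (hkm : k ≤ m) :
    Integrable (fun p => ‖iteratedFDeriv ℝ k u p‖ ^ 2) :=
  ((hu.continuous_iteratedFDeriv (by exact_mod_cast hkm)).memLp_of_hasCompactSupport
    (μ := volume) (h2u.iteratedFDeriv k)).integrable_norm_pow two_ne_zero

theorem L2sq_iteratedFDeriv_le_HSobSq [NormedSpace ℝ F] {k m : ℕ} (hkm : k ≤ m) (f : Pt → F) :
    L2sq (iteratedFDeriv ℝ k f) ≤ HSobSq m f :=
  Finset.single_le_sum (f := fun n => L2sq (iteratedFDeriv ℝ n f))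
    (fun _ _ => L2sq_nonneg _) (Finset.mem_range.2 (Nat.lt_succ_of_le hkm))

theorem L2sq_fderiv_le_HSobSq_one [NormedSpace ℝ F] (f : Pt → F) :
    L2sq (fderiv ℝ f) ≤ HSobSq 1 f := by
  simpa [L2sq] using L2sq_iteratedFDeriv_le_HSobSq (k := 1) le_rfl f

theorem toReal_eLpNorm_three_pow_four_le [NormedSpace ℝ F] [FiniteDimensional ℝ F] {u : Pt → F}
    (hu : ContDiff ℝ 1 u) (h2u : HasCompactSupport u) :
    (eLpNorm u 3 volume).toReal ^ 4 ≤
      (SNormLESNormFDerivOfEqConst F (volume : Measure Pt) 2 : ℝ) ^ 2 * L2sq u *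
        L2sq (fderiv ℝ u) := by
  have hDu : Continuous (fderiv ℝ u) := hu.continuous_fderiv one_ne_zero
  have hu2 : MemLp u 2 := hu.continuous.memLp_of_hasCompactSupport (μ := volume) h2u
  have hDu2 : MemLp (fderiv ℝ u) 2 :=
    hDu.memLp_of_hasCompactSupport (μ := volume) (h2u.fderiv (𝕜 := ℝ))
  have h := ENNReal.toReal_mono (by have := hu2.2.ne; have := hDu2.2.ne; finiteness)
    (eLpNorm_three_sq_le_eLpNorm_mul_eLpNorm_fderiv (E := Pt) (μ := volume) (by simp) hu h2u)
  simp only [ENNReal.toReal_pow, ENNReal.toReal_mul, ENNReal.coe_toReal] at h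
  calc (eLpNorm u 3 volume).toReal ^ 4 = ((eLpNorm u 3 volume).toReal ^ 2) ^ 2 := by ring
    _ ≤ (SNormLESNormFDerivOfEqConst F (volume : Measure Pt) 2 * (eLpNorm u 2 volume).toReal *
          (eLpNorm (fderiv ℝ u) 2 volume).toReal) ^ 2 := by gcongr
    _ = _ := by rw [mul_pow, mul_pow, toReal_eLpNorm_two_sq hu2, toReal_eLpNorm_two_sq hDu2]

theorem toReal_eLpNorm_three_pow_four_le_HSobSq [NormedSpace ℝ F] [FiniteDimensional ℝ F]
    {u : Pt → F} (hu : ContDiff ℝ 1 u) (h2u : HasCompactSupport u) :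
    (eLpNorm u 3 volume).toReal ^ 4 ≤
      (SNormLESNormFDerivOfEqConst F (volume : Measure Pt) 2 : ℝ) ^ 2 * L2sq u * HSobSq 1 u :=
  (toReal_eLpNorm_three_pow_four_le hu h2u).trans <| mul_le_mul_of_nonneg_left
    (L2sq_fderiv_le_HSobSq_one u) (mul_nonneg (sq_nonneg _) (L2sq_nonneg u))

end norms

section partialZ
variable {v : Pt → ℝ × ℝ}

theorem norm_ez : ‖ez‖ = 1 := by simp [ez, Prod.norm_def]

theorem L2sq_fderiv_apply_ez_le_HSobSq_one (hv : ContDiff ℝ 1 v) (h2v : HasCompactSupport v) :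
    L2sq (fun p => fderiv ℝ v p ez) ≤ HSobSq 1 v :=
  calc L2sq (fun p => fderiv ℝ v p ez) ≤ L2sq (iteratedFDeriv ℝ 1 v) :=
        L2sq_le_L2sq_of_norm_le (integrable_norm_iteratedFDeriv_sq hv h2v le_rfl) fun p => by
          simpa [norm_ez] using norm_fderiv_apply_le_norm_iteratedFDeriv_one v p ez
    _ ≤ HSobSq 1 v := L2sq_iteratedFDeriv_le_HSobSq le_rfl v

theorem L2sq_fderiv_fderiv_apply_ez_le_HSobSq_two (hv : ContDiff ℝ 2 v)
    (h2v : HasCompactSupport v) :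
    L2sq (fderiv ℝ fun p => fderiv ℝ v p ez) ≤ HSobSq 2 v :=
  calc L2sq (fderiv ℝ fun p => fderiv ℝ v p ez) ≤ L2sq (iteratedFDeriv ℝ 2 v) :=
        L2sq_le_L2sq_of_norm_le (integrable_norm_iteratedFDeriv_sq hv h2v le_rfl) fun p => by
          simpa [norm_ez] using norm_fderiv_fderiv_apply_le_norm_iteratedFDeriv_two
            ((hv.fderiv_right (m := 1) le_rfl).differentiable one_ne_zero p) ez
    _ ≤ HSobSq 2 v := L2sq_iteratedFDeriv_le_HSobSq le_rfl v

end partialZ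

theorem le_of_pow_four_le_mul {x M ξ a A b B c d : ℝ} (hx : 0 ≤ x) (hM : 0 ≤ M) (hξ : 0 < ξ)
    (ha : 0 ≤ a) (hA : 0 ≤ A) (hb : 0 ≤ b) (hB : 0 ≤ B) (hc : 0 ≤ c) (hd : 0 ≤ d)
    (h : x ^ 4 ≤ M * ((a * A) * (b * B) * (c * d))) :
    x ≤ (M + 1) / ξ * (1 + c * d) * (a + b) + ξ * (A + B) := by
  rw [mul_assoc _ (1 + c * d)]
  set s := (1 + c * d) * (a + b)
  set t := A + B
  have hs : 16 * (a * b * (c * d)) ≤ s ^ 2 := by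
    have h1 : 4 * (c * d) ≤ (1 + c * d) ^ 2 := by nlinarith [sq_nonneg (1 - c * d)]
    have h2 : 4 * (a * b) ≤ (a + b) ^ 2 := by nlinarith [sq_nonneg (a - b)]
    calc 16 * (a * b * (c * d)) = (4 * (a * b)) * (4 * (c * d)) := by ring
      _ ≤ (a + b) ^ 2 * (1 + c * d) ^ 2 := by gcongr
      _ = s ^ 2 := by ring
  have ht : 4 * (A * B) ≤ t ^ 2 := by nlinarith [sq_nonneg (A - B)]
  set y := (M + 1) / ξ * s + ξ * t
  -- AM-GM with weights chosen so that the product of the two terms is `(M + 1) * s * t`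
  have hy : 4 * ((M + 1) * s * t) ≤ y ^ 2 := by
    have : (M + 1) / ξ * s * (ξ * t) = (M + 1) * s * t := by field_simp
    nlinarith [sq_nonneg ((M + 1) / ξ * s - ξ * t)]
  have hy0 : 0 ≤ y := by positivity
  rw [← pow_le_pow_iff_left₀ hx hy0 four_ne_zero]
  calc x ^ 4 ≤ M * ((a * A) * (b * B) * (c * d)) := h
    _ ≤ 64 * (M + 1) ^ 2 * ((a * A) * (b * B) * (c * d)) := by gcongr; nlinarith
    _ = (M + 1) ^ 2 * (16 * (a * b * (c * d)) * (4 * (A * B))) := by ring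
    _ ≤ (M + 1) ^ 2 * (s ^ 2 * t ^ 2) := by gcongr
    _ = (4 * ((M + 1) * s * t)) ^ 2 / 16 := by ring
    _ ≤ (y ^ 2) ^ 2 / 16 := by gcongr
    _ ≤ (y ^ 2) ^ 2 := div_le_self (by positivity) (by norm_num)
    _ = y ^ 4 := by ring

theorem abs_integral_mul_inner2_fderiv_pow_four_le {V v : Pt → ℝ × ℝ} {W : Pt → ℝ}
    (hV : ContDiff ℝ 1 V) (h2V : HasCompactSupport V) (hv : ContDiff ℝ 2 v)
    (h2v : HasCompactSupport v) (hW : ContDiff ℝ 1 W) (h2W : HasCompactSupport W) :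
    |∫ p, W p * inner2 (V p) (fderiv ℝ v p ez)| ^ 4 ≤
      16 * (SNormLESNormFDerivOfEqConst ℝ (volume : Measure Pt) 2 : ℝ) ^ 2 *
        (SNormLESNormFDerivOfEqConst (ℝ × ℝ) (volume : Measure Pt) 2 : ℝ) ^ 4 *
        ((L2sq V * HSobSq 1 V) * (L2sq W * HSobSq 1 W) * (HSobSq 1 v * HSobSq 2 v)) := by
  set CW := (SNormLESNormFDerivOfEqConst ℝ (volume : Measure Pt) 2 : ℝ)
  set CV := (SNormLESNormFDerivOfEqConst (ℝ × ℝ) (volume : Measure Pt) 2 : ℝ)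
  set g := fun p => fderiv ℝ v p ez
  have hg : ContDiff ℝ 1 g :=
    (ContinuousLinearMap.apply ℝ (ℝ × ℝ) ez).contDiff.comp (hv.fderiv_right le_rfl)
  have h2g : HasCompactSupport g := h2v.fderiv_apply ℝ ez
  have boundW := toReal_eLpNorm_three_pow_four_le_HSobSq hW h2W
  have boundV := toReal_eLpNorm_three_pow_four_le_HSobSq hV h2V
  have boundg : (eLpNorm g 3 volume).toReal ^ 4 ≤ CV ^ 2 * HSobSq 1 v * HSobSq 2 v :=
    (toReal_eLpNorm_three_pow_four_le hg h2g).trans <| mul_le_mul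
      (mul_le_mul_of_nonneg_left (L2sq_fderiv_apply_ez_le_HSobSq_one (hv.of_le one_le_two) h2v)
        (sq_nonneg _))
      (L2sq_fderiv_fderiv_apply_ez_le_HSobSq_two hv h2v) (L2sq_nonneg _)
      (mul_nonneg (sq_nonneg _) (HSobSq_nonneg 1 v))
  calc |∫ p, W p * inner2 (V p) (g p)| ^ 4
      ≤ (2 * (eLpNorm W 3 volume).toReal * (eLpNorm V 3 volume).toReal *
          (eLpNorm g 3 volume).toReal) ^ 4 := by
        gcongr
        exact abs_integral_mul_inner2_le (hW.continuous.memLp_of_hasCompactSupport h2W)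
          (hV.continuous.memLp_of_hasCompactSupport h2V)
          (hg.continuous.memLp_of_hasCompactSupport h2g)
    _ = 16 * (eLpNorm W 3 volume).toReal ^ 4 * (eLpNorm V 3 volume).toReal ^ 4 *
          (eLpNorm g 3 volume).toReal ^ 4 := by ring
    _ ≤ 16 * (CW ^ 2 * L2sq W * HSobSq 1 W) * (CV ^ 2 * L2sq V * HSobSq 1 V) *
          (CV ^ 2 * HSobSq 1 v * HSobSq 2 v) := by
        have := L2sq_nonneg W; have := L2sq_nonneg V
        have := HSobSq_nonneg 1 W; have := HSobSq_nonneg 1 V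
        gcongr
    _ = _ := by ring

/-- For any `ξ > 0` there is `C_ξ > 0` such that for all `V ∈ H¹(S, ℝ²)`, `v ∈ H²(S, ℝ²)`
and `W ∈ H¹(S, ℝ)`:
`|(W V, ∂_z v)_{L²}| ≤ C_ξ (1 + ‖v‖²_{H¹} ‖v‖²_{H²})(‖V‖²_{L²} + ‖W‖²_{L²})
  + ξ (‖V‖²_{H¹} + ‖W‖²_{H¹})`. -/
theorem interpolation_trilinear_estimate :
    ∀ ξ : ℝ, 0 < ξ → ∃ C : ℝ, 0 < C ∧
      ∀ (V : Pt → ℝ × ℝ) (v : Pt → ℝ × ℝ) (W : Pt → ℝ),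
        ContDiff ℝ 1 V → HasCompactSupport V →
        ContDiff ℝ 2 v → HasCompactSupport v →
        ContDiff ℝ 1 W → HasCompactSupport W →
        |∫ p : Pt, W p * inner2 (V p) (fderiv ℝ v p ez)| ≤
          C * (1 + HSobSq 1 v * HSobSq 2 v) * (L2sq V + L2sq W)
            + ξ * (HSobSq 1 V + HSobSq 1 W) := by
  intro ξ hξ
  set M := 16 * (SNormLESNormFDerivOfEqConst ℝ (volume : Measure Pt) 2 : ℝ) ^ 2 *
    (SNormLESNormFDerivOfEqConst (ℝ × ℝ) (volume : Measure Pt) 2 : ℝ) ^ 4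
  refine ⟨(M + 1) / ξ, by positivity, fun V v W hV h2V hv h2v hW h2W => ?_⟩
  exact le_of_pow_four_le_mul (abs_nonneg _) (by positivity) hξ (L2sq_nonneg V)
    (HSobSq_nonneg 1 V) (L2sq_nonneg W) (HSobSq_nonneg 1 W) (HSobSq_nonneg 1 v)
    (HSobSq_nonneg 2 v) (abs_integral_mul_inner2_fderiv_pow_four_le hV h2V hv h2v hW h2W)
end
end
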